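/- arXiv:2507.15552 — 2 statements merged into one kernel-verified Lean document; each statement's English description precedes it below -/
import Mathlib

section
/- For every real number B > 1, lim_{α→∞} s_B(α) = s_B, i.e. the quantities s_B(α) associated with the truncated alphabets {1, 2, …, α} converge, as α → ∞, to the quantity s_B associated with the full alphabet of all positive integers. -/
open Filter Topology MeasureTheory

/-- The Gauss map `T(x) = 1/x mod 1`. -/
noncomputable def gaussMap (x : ℝ) : ℝ := Int.fract (1 / x)

/-- The `n`-th continued fraction partial quotient of `x`:
`a_n(x) = ⌊1 / T^{n-1}(x)⌋` for `n ≥ 1`. -/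
noncomputable def cfa (n : ℕ) (x : ℝ) : ℤ := ⌊1 / (gaussMap^[n - 1] x)⌋

/-- The set of irrational `x ∈ [0,1)` whose odd-order partial quotients all equal 1. -/
def Ieven : Set ℝ :=
  {x | x ∈ Set.Ico (0 : ℝ) 1 ∧ Irrational x ∧ ∀ k : ℕ, cfa (2 * k + 1) x = 1}

/-- Given `[a_2, a_4, …, a_{2n}]`, the denominator `q_{2n}` of
`[0; 1, a_2, 1, a_4, …, 1, a_{2n}]` (with `q_0 = q_1 = 1`,
`q_{2j} = a_{2j} q_{2j-1} + q_{2j-2}`, `q_{2j+1} = q_{2j} + q_{2j-1}`). -/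
def qEven (l : List ℕ) : ℕ :=
  (l.foldl (fun p a => (p.2 + p.1, a * (p.2 + p.1) + p.2)) ((0 : ℕ), (1 : ℕ))).2

/-- `f_{n,B}(ρ) = Σ_{a_2,…,a_{2n} ∈ 𝒜} (B^{2n} q_{2n}²)^{−ρ}`. -/
noncomputable def fnB (A : Set ℕ) (B : ℝ) (n : ℕ) (ρ : ℝ) : ENNReal :=
  ∑' v : Fin n → A,
    ENNReal.ofReal ((B ^ (2 * n) * (qEven (List.ofFn fun i => (v i : ℕ)) : ℝ) ^ 2) ^ (-ρ))

/-- `s_{n,B}(𝒜) = inf {ρ ≥ 0 : f_{n,B}(ρ) ≤ 1}`. -/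
noncomputable def snB (A : Set ℕ) (B : ℝ) (n : ℕ) : ℝ :=
  sInf {ρ : ℝ | 0 ≤ ρ ∧ fnB A B n ρ ≤ 1}

/-- `q_n(x)`: denominator of the `n`-th convergent of `x`. -/
noncomputable def qden (x : ℝ) : ℕ → ℤ
  | 0 => 1
  | 1 => cfa 1 x
  | (n + 2) => cfa (n + 2) x * qden x (n + 1) + qden x n

/-- `p_n(x)`: numerator of the `n`-th convergent of `x ∈ [0,1)`. -/
noncomputable def pnum (x : ℝ) : ℕ → ℤ
  | 0 => 0
  | 1 => 1
  | (n + 2) => cfa (n + 2) x * pnum x (n + 1) + pnum x n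

/-!
Write `f_n(𝒜, ρ)` for `fnB 𝒜 B n ρ`. Since `q(uv)` lies between `q(u) q(v)` and `2 q(u) q(v)`, the
sums satisfy `f_{m+n} ≤ f_m f_n` and `4^{-ρ} f_m f_n ≤ f_{m+n}`. By the first inequality, `f_n(ρ') ≤ 1`
for one `n ≥ 1` forces `lim s_n ≤ ρ'`; so for `ρ' < s_B` all `f_n(ℕ_{≥1}, ρ')` exceed `1`. Every weight
`B^{2n} q²` is at least `B^{2n}`, hence for `ρ < ρ'` and `n` large `4^{-ρ} f_n(ℕ_{≥1}, ρ) > 1`. By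
monotone convergence this persists for the alphabet `{1, …, α}` with `α` large, and the second
inequality then gives `f_{kn}(ρ) > 1` for all `k ≥ 1`, i.e. `s_B(α) ≥ ρ`. The bound `s_B(α) ≤ s_B` is
monotonicity in the alphabet.
-/

open scoped ENNReal

-- One step `(q_{2j-1}, q_{2j}) ↦ (q_{2j+1}, q_{2j+2})` of the recursion computed by `qEven`.
def qStep (p : ℕ × ℕ) (a : ℕ) : ℕ × ℕ := (p.2 + p.1, a * (p.2 + p.1) + p.2)

lemma qEven_eq_foldl (l : List ℕ) : qEven l = (l.foldl qStep (0, 1)).2 := rfl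

lemma foldl_qStep (l : List ℕ) (s : ℕ × ℕ) :
    l.foldl qStep s =
      (s.1 * (l.foldl qStep (1, 0)).1 + s.2 * (l.foldl qStep (0, 1)).1,
       s.1 * (l.foldl qStep (1, 0)).2 + s.2 * (l.foldl qStep (0, 1)).2) := by
  induction l generalizing s with
  | nil => simp
  | cons a t ih =>
    simp only [List.foldl_cons]
    rw [ih (qStep s a), ih (qStep (1, 0) a), ih (qStep (0, 1) a)]
    simp only [qStep, Prod.mk.injEq]
    constructor <;> ring

lemma one_le_snd_foldl_qStep (l : List ℕ) {s : ℕ × ℕ} (h : 1 ≤ s.2) :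
    1 ≤ (l.foldl qStep s).2 := by
  induction l generalizing s with
  | nil => exact h
  | cons a t ih => exact ih (by simp only [qStep]; omega)

lemma fst_le_snd_foldl_qStep (l : List ℕ) (hl : ∀ a ∈ l, 1 ≤ a) {s : ℕ × ℕ} (h : s.1 ≤ s.2) :
    (l.foldl qStep s).1 ≤ (l.foldl qStep s).2 := by
  induction l generalizing s with
  | nil => exact h
  | cons a t ih =>
    refine ih (fun b hb => hl b (List.mem_cons_of_mem a hb)) ?_
    have ha : 1 ≤ a := hl a List.mem_cons_self
    simp only [qStep]
    nlinarith

lemma snd_foldl_qStep_le (l : List ℕ) :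
    (l.foldl qStep (1, 0)).2 ≤ (l.foldl qStep (0, 1)).2 := by
  cases l with
  | nil => simp
  | cons a t =>
    have h₁ : qStep (1, 0) a = (1, a) := by simp [qStep]
    have h₂ : qStep (0, 1) a = (1, a + 1) := by simp [qStep]
    simp only [List.foldl_cons, h₁, h₂]
    rw [foldl_qStep t (1, a), foldl_qStep t (1, a + 1)]
    nlinarith

lemma one_le_qEven (l : List ℕ) : 1 ≤ qEven l := one_le_snd_foldl_qStep l le_rfl

lemma qEven_singleton (a : ℕ) : qEven [a] = a + 1 := by simp [qEven]

lemma qEven_append (l₁ l₂ : List ℕ) :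
    qEven (l₁ ++ l₂) =
      (l₁.foldl qStep (0, 1)).1 * (l₂.foldl qStep (1, 0)).2
        + qEven l₁ * qEven l₂ := by
  rw [qEven_eq_foldl, List.foldl_append, foldl_qStep]
  rfl

lemma qEven_mul_qEven_le (l₁ l₂ : List ℕ) : qEven l₁ * qEven l₂ ≤ qEven (l₁ ++ l₂) := by
  rw [qEven_append]
  exact Nat.le_add_left _ _

lemma qEven_append_le (l₁ l₂ : List ℕ) (h₁ : ∀ a ∈ l₁, 1 ≤ a) :
    qEven (l₁ ++ l₂) ≤ 2 * (qEven l₁ * qEven l₂) := by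
  rw [qEven_append, two_mul]
  gcongr
  · exact fst_le_snd_foldl_qStep l₁ h₁ zero_le_one
  · exact snd_foldl_qStep_le l₂

def cfWeight (B : ℝ) (l : List ℕ) : ℝ := B ^ (2 * l.length) * (qEven l : ℝ) ^ 2

noncomputable def cfTerm (B ρ : ℝ) (l : List ℕ) : ℝ≥0∞ := ENNReal.ofReal (cfWeight B l ^ (-ρ))

lemma fnB_eq_tsum_cfTerm (A : Set ℕ) (B : ℝ) (n : ℕ) (ρ : ℝ) :
    fnB A B n ρ = ∑' v : Fin n → A, cfTerm B ρ (List.ofFn fun i => (v i : ℕ)) := by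
  simp only [fnB, cfTerm, cfWeight, List.length_ofFn]

lemma pow_le_cfWeight (B : ℝ) (l : List ℕ) : B ^ (2 * l.length) ≤ cfWeight B l := by
  have hq : (1 : ℝ) ≤ qEven l := by exact_mod_cast one_le_qEven l
  exact le_mul_of_one_le_right ((even_two_mul _).pow_nonneg B) (one_le_pow₀ hq)

lemma one_le_cfWeight {B : ℝ} (hB : 1 ≤ B) (l : List ℕ) : 1 ≤ cfWeight B l :=
  (one_le_pow₀ hB).trans (pow_le_cfWeight B l)

lemma cfWeight_append (B : ℝ) (l₁ l₂ : List ℕ) :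
    cfWeight B (l₁ ++ l₂) = (B ^ 2) ^ (l₁.length + l₂.length) * (qEven (l₁ ++ l₂) : ℝ) ^ 2 := by
  rw [cfWeight, List.length_append, pow_mul]

lemma cfWeight_mul_cfWeight (B : ℝ) (l₁ l₂ : List ℕ) :
    cfWeight B l₁ * cfWeight B l₂ =
      (B ^ 2) ^ (l₁.length + l₂.length) * ((qEven l₁ : ℝ) * qEven l₂) ^ 2 := by
  simp only [cfWeight, pow_mul, pow_add]
  ring

lemma cfWeight_mul_le (B : ℝ) (l₁ l₂ : List ℕ) :
    cfWeight B l₁ * cfWeight B l₂ ≤ cfWeight B (l₁ ++ l₂) := by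
  rw [cfWeight_append, cfWeight_mul_cfWeight]
  gcongr
  exact_mod_cast qEven_mul_qEven_le l₁ l₂

lemma cfWeight_append_le (B : ℝ) (l₁ l₂ : List ℕ) (h₁ : ∀ a ∈ l₁, 1 ≤ a) :
    cfWeight B (l₁ ++ l₂) ≤ 4 * (cfWeight B l₁ * cfWeight B l₂) := by
  rw [cfWeight_append, cfWeight_mul_cfWeight]
  calc (B ^ 2) ^ (l₁.length + l₂.length) * (qEven (l₁ ++ l₂) : ℝ) ^ 2
      ≤ (B ^ 2) ^ (l₁.length + l₂.length) * (2 * ((qEven l₁ : ℝ) * qEven l₂)) ^ 2 := by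
        gcongr
        exact_mod_cast qEven_append_le l₁ l₂ h₁
    _ = 4 * ((B ^ 2) ^ (l₁.length + l₂.length) * ((qEven l₁ : ℝ) * qEven l₂) ^ 2) := by ring

section Term

variable {B ρ : ℝ}

lemma ofReal_rpow_neg_le {x y : ℝ} (hx : 0 < x) (hxy : x ≤ y) (hρ : 0 ≤ ρ) :
    ENNReal.ofReal (y ^ (-ρ)) ≤ ENNReal.ofReal (x ^ (-ρ)) :=
  ENNReal.ofReal_le_ofReal (Real.rpow_le_rpow_of_nonpos hx hxy (neg_nonpos.2 hρ))

lemma ofReal_mul_rpow {x y : ℝ} (hx : 0 ≤ x) (hy : 0 ≤ y) (r : ℝ) :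
    ENNReal.ofReal ((x * y) ^ r) = ENNReal.ofReal (x ^ r) * ENNReal.ofReal (y ^ r) := by
  rw [Real.mul_rpow hx hy, ENNReal.ofReal_mul (Real.rpow_nonneg hx r)]

lemma cfTerm_append_le (hB : 1 ≤ B) (hρ : 0 ≤ ρ) (l₁ l₂ : List ℕ) :
    cfTerm B ρ (l₁ ++ l₂) ≤ cfTerm B ρ l₁ * cfTerm B ρ l₂ := by
  have h₁ := one_le_cfWeight hB l₁
  have h₂ := one_le_cfWeight hB l₂
  rw [cfTerm, cfTerm, cfTerm, ← ofReal_mul_rpow (by linarith) (by linarith)]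
  exact ofReal_rpow_neg_le (by positivity) (cfWeight_mul_le B l₁ l₂) hρ

lemma mul_cfTerm_le_cfTerm_append (hB : 1 ≤ B) (hρ : 0 ≤ ρ) (l₁ l₂ : List ℕ)
    (h₁ : ∀ a ∈ l₁, 1 ≤ a) :
    ENNReal.ofReal ((4 : ℝ) ^ (-ρ)) * (cfTerm B ρ l₁ * cfTerm B ρ l₂) ≤ cfTerm B ρ (l₁ ++ l₂) := by
  have hw₁ := one_le_cfWeight hB l₁
  have hw₂ := one_le_cfWeight hB l₂
  have hw := one_le_cfWeight hB (l₁ ++ l₂)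
  rw [cfTerm, cfTerm, cfTerm, ← ofReal_mul_rpow (by linarith) (by linarith),
    ← ofReal_mul_rpow (by norm_num) (by positivity)]
  exact ofReal_rpow_neg_le (by linarith) (cfWeight_append_le B l₁ l₂ h₁) hρ

lemma cfTerm_anti (hB : 1 ≤ B) {ρ' : ℝ} (h : ρ ≤ ρ') (l : List ℕ) :
    cfTerm B ρ' l ≤ cfTerm B ρ l :=
  ENNReal.ofReal_le_ofReal
    (Real.rpow_le_rpow_of_exponent_le (one_le_cfWeight hB l) (neg_le_neg h))

lemma mul_cfTerm_le_cfTerm (hB : 1 ≤ B) {ρ' : ℝ} (h : ρ ≤ ρ') (l : List ℕ) :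
    ENNReal.ofReal (((B ^ 2) ^ (ρ' - ρ)) ^ l.length) * cfTerm B ρ' l ≤ cfTerm B ρ l := by
  have hw : 0 < cfWeight B l := zero_lt_one.trans_le (one_le_cfWeight hB l)
  have hpow : ((B ^ 2) ^ (ρ' - ρ)) ^ l.length ≤ cfWeight B l ^ (ρ' - ρ) := by
    rw [← Real.rpow_mul_natCast (by positivity), mul_comm, Real.rpow_natCast_mul (by positivity),
      ← pow_mul]
    exact Real.rpow_le_rpow (by positivity) (pow_le_cfWeight B l) (by linarith)
  rw [cfTerm, cfTerm, ← ENNReal.ofReal_mul (by positivity)]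
  refine ENNReal.ofReal_le_ofReal ?_
  calc ((B ^ 2) ^ (ρ' - ρ)) ^ l.length * cfWeight B l ^ (-ρ')
      ≤ cfWeight B l ^ (ρ' - ρ) * cfWeight B l ^ (-ρ') := by gcongr
    _ = cfWeight B l ^ (-ρ) := by rw [← Real.rpow_add hw]; ring_nf

end Term

section SumOverTuples

variable {A : Set ℕ} {B ρ : ℝ}

lemma fnB_eq_tsum_indicator (A : Set ℕ) (B : ℝ) (n : ℕ) (ρ : ℝ) :
    fnB A B n ρ = ∑' w : Fin n → ℕ,
      (Set.univ.pi fun _ => A).indicator (fun w => cfTerm B ρ (List.ofFn w)) w := by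
  rw [fnB_eq_tsum_cfTerm, ← tsum_subtype]
  let e : (Set.univ.pi fun _ : Fin n => A) ≃ (Fin n → A) :=
    (Equiv.subtypeEquivRight fun w => by simp).trans Equiv.subtypePiEquivPi
  exact (e.tsum_eq fun v => cfTerm B ρ (List.ofFn fun i => (v i : ℕ))).symm

lemma fnB_mono {A' : Set ℕ} (h : A ⊆ A') (B : ℝ) (n : ℕ) (ρ : ℝ) :
    fnB A B n ρ ≤ fnB A' B n ρ := by
  rw [fnB_eq_tsum_indicator, fnB_eq_tsum_indicator]
  exact ENNReal.tsum_le_tsum fun w =>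
    Set.indicator_le_indicator_of_subset (Set.pi_mono fun _ _ => h) (fun _ => zero_le) w

lemma fnB_anti (hB : 1 ≤ B) {ρ' : ℝ} (h : ρ ≤ ρ') (A : Set ℕ) (n : ℕ) :
    fnB A B n ρ' ≤ fnB A B n ρ := by
  rw [fnB_eq_tsum_cfTerm, fnB_eq_tsum_cfTerm]
  exact ENNReal.tsum_le_tsum fun v => cfTerm_anti hB h _

lemma mul_fnB_le_fnB (hB : 1 ≤ B) {ρ' : ℝ} (h : ρ ≤ ρ') (A : Set ℕ) (n : ℕ) :
    ENNReal.ofReal (((B ^ 2) ^ (ρ' - ρ)) ^ n) * fnB A B n ρ' ≤ fnB A B n ρ := by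
  rw [fnB_eq_tsum_cfTerm, fnB_eq_tsum_cfTerm, ← ENNReal.tsum_mul_left]
  refine ENNReal.tsum_le_tsum fun v => ?_
  simpa only [List.length_ofFn] using mul_cfTerm_le_cfTerm hB h (List.ofFn fun i => (v i : ℕ))

lemma fnB_zero (A : Set ℕ) (B ρ : ℝ) : fnB A B 0 ρ = 1 := by
  simp [fnB, qEven]

lemma fnB_add_eq_tsum (A : Set ℕ) (B ρ : ℝ) (m n : ℕ) :
    fnB A B (m + n) ρ = ∑' p : (Fin m → A) × (Fin n → A),
      cfTerm B ρ ((List.ofFn fun i => (p.1 i : ℕ)) ++ List.ofFn fun j => (p.2 j : ℕ)) := by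
  rw [fnB_eq_tsum_cfTerm, ← (Fin.appendEquiv m n).tsum_eq]
  refine tsum_congr fun p => ?_
  rw [← List.ofFn_fin_append]
  congr 2
  funext i
  induction i using Fin.addCases <;> simp [Fin.appendEquiv]

lemma fnB_mul_fnB_eq_tsum (A : Set ℕ) (B ρ : ℝ) (m n : ℕ) :
    fnB A B m ρ * fnB A B n ρ = ∑' p : (Fin m → A) × (Fin n → A),
      cfTerm B ρ (List.ofFn fun i => (p.1 i : ℕ)) * cfTerm B ρ (List.ofFn fun j => (p.2 j : ℕ)) := by
  rw [fnB_eq_tsum_cfTerm, fnB_eq_tsum_cfTerm, ENNReal.tsum_prod']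
  simp_rw [ENNReal.tsum_mul_left, ENNReal.tsum_mul_right]

lemma fnB_add_le (hB : 1 ≤ B) (hρ : 0 ≤ ρ) (A : Set ℕ) (m n : ℕ) :
    fnB A B (m + n) ρ ≤ fnB A B m ρ * fnB A B n ρ := by
  rw [fnB_add_eq_tsum, fnB_mul_fnB_eq_tsum]
  exact ENNReal.tsum_le_tsum fun p => cfTerm_append_le hB hρ _ _

lemma mul_fnB_mul_fnB_le (hA : A ⊆ {m | 1 ≤ m}) (hB : 1 ≤ B) (hρ : 0 ≤ ρ) (m n : ℕ) :
    ENNReal.ofReal ((4 : ℝ) ^ (-ρ)) * (fnB A B m ρ * fnB A B n ρ) ≤ fnB A B (m + n) ρ := by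
  rw [fnB_add_eq_tsum, fnB_mul_fnB_eq_tsum, ← ENNReal.tsum_mul_left]
  refine ENNReal.tsum_le_tsum fun p => mul_cfTerm_le_cfTerm_append hB hρ _ _ ?_
  simp only [List.mem_ofFn, forall_exists_index]
  rintro _ i rfl
  exact hA (p.1 i).2

end SumOverTuples

section Multiplicative

variable {M : Type*} [CommMonoid M] [Preorder M] [MulRightMono M] {f : ℕ → M}

lemma apply_succ_mul_le_pow (hf : ∀ m n, f (m + n) ≤ f m * f n) (n k : ℕ) :
    f ((k + 1) * n) ≤ f n ^ (k + 1) := by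
  induction k with
  | zero => simp
  | succ k ih =>
    calc f ((k + 1 + 1) * n) = f ((k + 1) * n + n) := by ring_nf
      _ ≤ f ((k + 1) * n) * f n := hf _ _
      _ ≤ f n ^ (k + 1) * f n := mul_le_mul_left ih _
      _ = f n ^ (k + 1 + 1) := (pow_succ _ _).symm

lemma pow_le_apply_succ_mul (hf : ∀ m n, f m * f n ≤ f (m + n)) (n k : ℕ) :
    f n ^ (k + 1) ≤ f ((k + 1) * n) := by
  induction k with
  | zero => simp
  | succ k ih =>
    calc f n ^ (k + 1 + 1) = f n ^ (k + 1) * f n := pow_succ _ _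
      _ ≤ f ((k + 1) * n) * f n := mul_le_mul_left ih _
      _ ≤ f ((k + 1) * n + n) := hf _ _
      _ = f ((k + 1 + 1) * n) := by ring_nf

end Multiplicative

lemma tendsto_succ_mul_atTop {n : ℕ} (hn : n ≠ 0) :
    Tendsto (fun k : ℕ => (k + 1) * n) atTop atTop :=
  (tendsto_add_atTop_nat 1).atTop_mul_const' (Nat.pos_of_ne_zero hn)

lemma ENNReal.tsum_iSup_of_monotone {ι α : Type*} [Preorder ι] [IsDirectedOrder ι]
    {f : ι → α → ℝ≥0∞} (hf : Monotone f) :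
    ∑' a, ⨆ i, f i a = ⨆ i, ∑' a, f i a := by
  simp_rw [ENNReal.tsum_eq_iSup_sum, ENNReal.finsetSum_iSup_of_monotone fun a _ _ h => hf h a]
  exact iSup_comm

lemma tsum_one_div_add_two_sq_le_one :
    ∑' b : ℕ, ENNReal.ofReal (1 / ((b : ℝ) + 2) ^ 2) ≤ 1 := by
  have h := (hasSum_nat_add_iff' 2).mpr hasSum_zeta_two
  simp only [Finset.sum_range_succ, Finset.sum_range_zero, Nat.cast_add, Nat.cast_ofNat] at h
  rw [← ENNReal.ofReal_tsum_of_nonneg (fun _ => by positivity) h.summable, h.tsum_eq,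
    ENNReal.ofReal_le_one]
  norm_num
  nlinarith [Real.pi_lt_d2, Real.pi_pos]

section Admissible

variable {A : Set ℕ} {B ρ : ℝ}

lemma fnB_one (A : Set ℕ) (B ρ : ℝ) :
    fnB A B 1 ρ = ∑' a : A, ENNReal.ofReal ((B ^ 2 * ((a : ℝ) + 1) ^ 2) ^ (-ρ)) := by
  rw [fnB, ← (Equiv.funUnique (Fin 1) A).symm.tsum_eq]
  simp [qEven_singleton]

-- At `ρ = 1` the one-letter sum is at most `∑_{a ≥ 2} 1/a² = π²/6 - 1 < 1`; submultiplicativity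
-- handles longer words.
lemma fnB_le_one (hA : A ⊆ {m | 1 ≤ m}) (hB : 1 ≤ B) (n : ℕ) : fnB A B n 1 ≤ 1 := by
  have hN : fnB {m | 1 ≤ m} B 1 1 ≤ 1 := by
    rw [fnB_one]
    refine le_trans ?_ tsum_one_div_add_two_sq_le_one
    refine le_trans (ENNReal.tsum_le_tsum fun a => ?_) (ENNReal.tsum_comp_le_tsum_of_injective
      (f := fun a : {m : ℕ | 1 ≤ m} => (a : ℕ) - 1)
      (fun a b h => Subtype.ext (by
        have ha : 1 ≤ (a : ℕ) := a.2
        have hb : 1 ≤ (b : ℕ) := b.2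
        simp only at h
        omega)) _)
    have ha : ((((a : ℕ) - 1 : ℕ) : ℝ) + 2) = (a : ℝ) + 1 := by
      rw [Nat.cast_sub a.2]; push_cast; ring
    simp only [ha, Real.rpow_neg_one, one_div]
    refine ENNReal.ofReal_le_ofReal (inv_anti₀ (by positivity) ?_)
    exact le_mul_of_one_le_left (by positivity) (one_le_pow₀ hB)
  rcases n with _ | k
  · rw [fnB_zero]
  calc fnB A B (k + 1) 1 ≤ fnB {m | 1 ≤ m} B ((k + 1) * 1) 1 := by
        rw [mul_one]; exact fnB_mono hA B _ 1
    _ ≤ fnB {m | 1 ≤ m} B 1 1 ^ (k + 1) :=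
        apply_succ_mul_le_pow (f := fun n => fnB {m | 1 ≤ m} B n 1)
          (fnB_add_le hB zero_le_one _) 1 k
    _ ≤ 1 := pow_le_one₀ zero_le hN

lemma nonempty_admissible (hA : A ⊆ {m | 1 ≤ m}) (hB : 1 ≤ B) (n : ℕ) :
    {ρ : ℝ | 0 ≤ ρ ∧ fnB A B n ρ ≤ 1}.Nonempty :=
  ⟨1, zero_le_one, fnB_le_one hA hB n⟩

end Admissible

lemma tendsto_fnB_inter_Iic (A : Set ℕ) (B : ℝ) (n : ℕ) (ρ : ℝ) :
    Tendsto (fun α => fnB (A ∩ Set.Iic α) B n ρ) atTop (𝓝 (fnB A B n ρ)) := by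
  set F := fun w : Fin n → ℕ => cfTerm B ρ (List.ofFn w)
  have hmono : Monotone fun α => (Set.univ.pi fun _ : Fin n => A ∩ Set.Iic α).indicator F :=
    fun α β h w => Set.indicator_le_indicator_of_subset
      (Set.pi_mono fun _ _ => Set.inter_subset_inter_right A (Set.Iic_subset_Iic.2 h))
      (fun _ => zero_le) w
  have hsup : ∀ w, (Set.univ.pi fun _ => A).indicator F w =
      ⨆ α, (Set.univ.pi fun _ : Fin n => A ∩ Set.Iic α).indicator F w := by
    intro w
    refine le_antisymm ?_ (iSup_le fun α => Set.indicator_le_indicator_of_subset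
      (Set.pi_mono fun _ _ => Set.inter_subset_left) (fun _ => zero_le) w)
    by_cases hw : w ∈ Set.univ.pi fun _ => A
    · refine le_iSup_of_le (∑ i, w i) (le_of_eq ?_)
      rw [Set.indicator_of_mem hw, Set.indicator_of_mem]
      exact fun i _ => ⟨hw i trivial, Finset.single_le_sum (fun _ _ => Nat.zero_le _)
        (Finset.mem_univ i)⟩
    · rw [Set.indicator_of_notMem hw]
      exact zero_le
  simp_rw [fnB_eq_tsum_indicator]
  rw [funext hsup, ENNReal.tsum_iSup_of_monotone hmono]
  exact tendsto_atTop_iSup fun α β h => ENNReal.tsum_le_tsum (hmono h)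

section SnB

variable {A : Set ℕ} {B ρ s : ℝ} {n : ℕ}

lemma snB_nonneg (A : Set ℕ) (B : ℝ) (n : ℕ) : 0 ≤ snB A B n :=
  Real.sInf_nonneg fun _ h => h.1

lemma snB_le (hρ : 0 ≤ ρ) (h : fnB A B n ρ ≤ 1) : snB A B n ≤ ρ :=
  csInf_le ⟨0, fun _ h => h.1⟩ ⟨hρ, h⟩

lemma le_snB (hB : 1 ≤ B) (hne : {ρ : ℝ | 0 ≤ ρ ∧ fnB A B n ρ ≤ 1}.Nonempty)
    (h : 1 < fnB A B n ρ) : ρ ≤ snB A B n :=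
  le_csInf hne fun _ hρ' => not_lt.1 fun hlt => (fnB_anti hB hlt.le A n).trans hρ'.2 |>.not_gt h

lemma snB_mono {A' : Set ℕ} (h : A ⊆ A') (hne : {ρ : ℝ | 0 ≤ ρ ∧ fnB A' B n ρ ≤ 1}.Nonempty) :
    snB A B n ≤ snB A' B n :=
  csInf_le_csInf ⟨0, fun _ h => h.1⟩ hne fun _ hρ => ⟨hρ.1, (fnB_mono h B n _).trans hρ.2⟩

variable (hs : Tendsto (fun n => snB A B n) atTop (𝓝 s))
include hs

lemma lim_snB_nonneg : 0 ≤ s :=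
  ge_of_tendsto' hs fun n => snB_nonneg A B n

lemma lim_snB_mono {A' : Set ℕ} {s' : ℝ} (hA' : A' ⊆ {m | 1 ≤ m}) (hB : 1 ≤ B) (h : A ⊆ A')
    (hs' : Tendsto (fun n => snB A' B n) atTop (𝓝 s')) : s ≤ s' :=
  le_of_tendsto_of_tendsto' hs hs' fun n => snB_mono h (nonempty_admissible hA' hB n)

lemma lim_snB_le (hB : 1 ≤ B) (hρ : 0 ≤ ρ) (hn : n ≠ 0) (h : fnB A B n ρ ≤ 1) : s ≤ ρ :=
  le_of_tendsto' (hs.comp (tendsto_succ_mul_atTop hn)) fun k => snB_le hρ <|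
    (apply_succ_mul_le_pow (f := fun n => fnB A B n ρ) (fnB_add_le hB hρ A) n k).trans
      (pow_le_one₀ zero_le h)

lemma le_lim_snB (hA : A ⊆ {m | 1 ≤ m}) (hB : 1 ≤ B) (hρ : 0 < ρ) (hn : n ≠ 0)
    (h : 1 ≤ ENNReal.ofReal ((4 : ℝ) ^ (-ρ)) * fnB A B n ρ) : ρ ≤ s := by
  set c := ENNReal.ofReal ((4 : ℝ) ^ (-ρ))
  have hc : c < 1 := ENNReal.ofReal_lt_one.2
    (Real.rpow_lt_one_of_one_lt_of_neg (by norm_num) (neg_lt_zero.2 hρ))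
  have hsuper : ∀ k l, c * fnB A B k ρ * (c * fnB A B l ρ) ≤ c * fnB A B (k + l) ρ := by
    intro k l
    calc c * fnB A B k ρ * (c * fnB A B l ρ) ≤ c * (c * (fnB A B k ρ * fnB A B l ρ)) := by
          rw [mul_mul_mul_comm, mul_assoc]
      _ ≤ c * fnB A B (k + l) ρ := by gcongr; exact mul_fnB_mul_fnB_le hA hB hρ.le k l
  refine ge_of_tendsto' (hs.comp (tendsto_succ_mul_atTop hn)) fun k => ?_
  refine le_snB hB (nonempty_admissible hA hB _) (not_le.1 fun hle => hc.not_ge ?_)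
  calc 1 ≤ (c * fnB A B n ρ) ^ (k + 1) := one_le_pow₀ h
    _ ≤ c * fnB A B ((k + 1) * n) ρ :=
        pow_le_apply_succ_mul (f := fun n => c * fnB A B n ρ) hsuper n k
    _ ≤ c := mul_le_of_le_one_right' hle

lemma exists_one_lt_mul_fnB (hB : 1 < B) (hρ : 0 ≤ ρ) (hρs : ρ < s) :
    ∃ n ≠ 0, 1 < ENNReal.ofReal ((4 : ℝ) ^ (-ρ)) * fnB A B n ρ := by
  obtain ⟨ρ', hρρ', hρ's⟩ := exists_between hρs
  have hbig : ∀ n ≠ 0, 1 < fnB A B n ρ' := fun n hn =>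
    not_le.1 fun h => (lim_snB_le hs hB.le (hρ.trans hρρ'.le) hn h).not_gt hρ's
  set b := (B ^ 2) ^ (ρ' - ρ)
  have hb : 1 < b := Real.one_lt_rpow (by nlinarith) (by linarith)
  obtain ⟨n, hbn, hn⟩ := ((tendsto_pow_atTop_atTop_of_one_lt hb).eventually_gt_atTop
    ((4 : ℝ) ^ ρ) |>.and (eventually_ne_atTop 0)).exists
  refine ⟨n, hn, ?_⟩
  calc 1 < ENNReal.ofReal ((4 : ℝ) ^ (-ρ) * b ^ n) := by
        rw [ENNReal.one_lt_ofReal, Real.rpow_neg (by norm_num)]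
        exact (one_lt_inv_mul₀ (by positivity)).2 hbn
    _ = ENNReal.ofReal ((4 : ℝ) ^ (-ρ)) * ENNReal.ofReal (b ^ n) :=
        ENNReal.ofReal_mul (by positivity)
    _ ≤ ENNReal.ofReal ((4 : ℝ) ^ (-ρ)) * (ENNReal.ofReal (b ^ n) * fnB A B n ρ') := by
        gcongr; exact le_mul_of_one_le_right' (hbig n hn).le
    _ ≤ ENNReal.ofReal ((4 : ℝ) ^ (-ρ)) * fnB A B n ρ := by
        gcongr; exact mul_fnB_le_fnB hB.le hρρ'.le A n

lemma eventually_le_lim_snB_inter_Iic (hA : A ⊆ {m | 1 ≤ m}) (hB : 1 < B) (hρ : 0 < ρ)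
    (hρs : ρ < s) :
    ∀ᶠ α in atTop, ∀ t, Tendsto (fun n => snB (A ∩ Set.Iic α) B n) atTop (𝓝 t) → ρ ≤ t := by
  obtain ⟨n, hn, h⟩ := exists_one_lt_mul_fnB hs hB hρ.le hρs
  filter_upwards [(ENNReal.Tendsto.const_mul (tendsto_fnB_inter_Iic A B n ρ)
    (Or.inr ENNReal.ofReal_ne_top)).eventually_const_lt h] with α hα t ht
  exact le_lim_snB ht (Set.inter_subset_left.trans hA) hB.le hρ hn hα.le

end SnB

/-- Lemma 2.6: for `B > 1`, `lim_{α→∞} s_B(α) = s_B`, where `s_B(α)` is the quantity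
for the truncated alphabet `{1, …, α}` and `s_B` the one for all positive integers. -/
theorem sB_alpha_tendsto_sB (B : ℝ) (hB : 1 < B) (sBα : ℕ → ℝ) (sB : ℝ)
    (hα : ∀ α : ℕ, 1 ≤ α →
      Tendsto (fun n => snB {m : ℕ | 1 ≤ m ∧ m ≤ α} B n) atTop (nhds (sBα α)))
    (hs : Tendsto (fun n => snB {m : ℕ | 1 ≤ m} B n) atTop (nhds sB)) :
    Tendsto sBα atTop (nhds sB) := by
  rw [tendsto_order]
  refine ⟨fun c hc => ?_, fun c hc => ?_⟩
  · rcases lt_or_ge c 0 with hc0 | hc0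
    · filter_upwards [eventually_ge_atTop 1] with α hα1
      exact hc0.trans_le (lim_snB_nonneg (hα α hα1))
    obtain ⟨ρ, hcρ, hρ⟩ := exists_between hc
    filter_upwards [eventually_le_lim_snB_inter_Iic hs subset_rfl hB (hc0.trans_lt hcρ) hρ,
      eventually_ge_atTop 1] with α hρα hα1
    exact hcρ.trans_le (hρα _ (hα α hα1))
  · filter_upwards [eventually_ge_atTop 1] with α hα1
    exact (lim_snB_mono (hα α hα1) subset_rfl hB.le (fun m hm => hm.1) hs).trans_lt hc
end

section
/- Let b > 1 and c > 1 be real numbers and let d satisfy 1 < d < b. Then for every positive integer m, each x ∈ E(b,c) = {x ∈ I_even : a_{2n}(x) ≥ c^{b^{2n}} for infinitely many n} satisfies at least one of the following: (i) there exists n with q_{2n}(x) ≥ m, q_{2n}(x) ≥ c^{d^{2n}/3}, and |x − p_{2n+1}(x)/q_{2n+1}(x)| ≤ q_{2n}(x)^{−(1+d²)}; (ii) there exists n with q_{2n}(x) ≥ m and |x − p_{2n+1}(x)/q_{2n+1}(x)| ≤ q_{2n}(x)^{−2(1+d²)}. Equivalently, for each m the family of balls B(p_{2n+1}(x)/q_{2n+1}(x),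 q_{2n}(x)^{−(1+d²)}) with q_{2n}(x) = q ≥ max{m, c^{d^{2n}/3}} together with the balls B(p_{2n+1}(x)/q_{2n+1}(x), q_{2n}(x)^{−2(1+d²)}) with q_{2n}(x) = q ≥ m covers E(b,c). -/
open Filter Topology MeasureTheory

/-!
Suppose `x` is covered by neither family. Then at every stage `k` with `q_{2k} ≥ m` the bound
`|x - p_{2k+1}/q_{2k+1}| ≤ 1 / (a_{2k+2} q_{2k}²)` forces `a_{2k+2} < q_{2k}^{d²-1}` when
`q_{2k} ≥ c^{d^{2k}/3}`, and `a_{2k+2} < q_{2k}^{2d²} < c^{2d² d^{2k}/3}` otherwise. Since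
`a_{2k+1} = 1` we also have `q_{2k+2} ≤ 3 a_{2k+2} q_{2k}`, so in both cases
`log q_{2k+2} ≤ d² (log q_{2k} + K d^{2k})` for a constant `K`, whence
`log q_{2k} = O(k d^{2k})`.
This contradicts `log a_{2k} ≥ b^{2k} log c` for infinitely many `k`, because `d < b`.
-/

open Real

lemma gaussMap_nonneg (y : ℝ) : 0 ≤ gaussMap y := Int.fract_nonneg _

lemma gaussMap_lt_one (y : ℝ) : gaussMap y < 1 := Int.fract_lt_one _

lemma Irrational.gaussMap {y : ℝ} (hy : Irrational y) : Irrational (_root_.gaussMap y) := by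
  rw [_root_.gaussMap, one_div]
  exact hy.inv.sub_intCast _

lemma Irrational.gaussMap_iterate {y : ℝ} (hy : Irrational y) (n : ℕ) :
    Irrational (_root_.gaussMap^[n] y) := by
  induction n with
  | zero => exact hy
  | succ n ih => rw [Function.iterate_succ_apply']; exact ih.gaussMap

lemma cfa_succ (n : ℕ) (x : ℝ) : cfa (n + 1) x = ⌊(gaussMap^[n] x)⁻¹⌋ := by
  rw [cfa, Nat.add_sub_cancel, one_div]

section Recurrence

variable {x : ℝ} (ha : ∀ n, 1 ≤ cfa (n + 1) x)
include ha

lemma one_le_qden : ∀ n, 1 ≤ qden x n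
  | 0 => le_rfl
  | 1 => ha 0
  | n + 2 => by
    have := one_le_qden n
    have := one_le_qden (n + 1)
    have := ha (n + 1)
    rw [qden]
    nlinarith

lemma cfa_mul_qden_le (n : ℕ) : cfa (n + 2) x * qden x (n + 1) ≤ qden x (n + 2) := by
  rw [qden]
  linarith [one_le_qden ha n]

lemma qden_le_qden_succ : ∀ n, qden x n ≤ qden x (n + 1)
  | 0 => ha 0
  | n + 1 => le_trans (le_mul_of_one_le_left (by linarith [one_le_qden ha (n + 1)]) (ha (n + 1)))
      (cfa_mul_qden_le ha n)

lemma cfa_le_qden (n : ℕ) : cfa (n + 2) x ≤ qden x (n + 2) :=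
  le_trans (le_mul_of_one_le_right (by linarith [ha (n + 1)]) (one_le_qden ha (n + 1)))
    (cfa_mul_qden_le ha n)

lemma qden_add_one_le (n : ℕ) : qden x n + 1 ≤ qden x (n + 2) := by
  have := one_le_qden ha (n + 1)
  have := ha (n + 1)
  rw [qden]
  nlinarith

lemma le_qden_two_mul : ∀ k : ℕ, (k : ℤ) + 1 ≤ qden x (2 * k)
  | 0 => le_rfl
  | k + 1 => by
    have := qden_add_one_le ha (2 * k)
    have := le_qden_two_mul k
    rw [show 2 * (k + 1) = 2 * k + 2 by ring]
    push_cast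
    omega

variable (hodd : ∀ k, cfa (2 * k + 1) x = 1)
include hodd

lemma qden_two_mul_add_one_le : ∀ k, qden x (2 * k + 1) ≤ 2 * qden x (2 * k)
  | 0 => by simp [qden, hodd 0]
  | k + 1 => by
    have h : qden x (2 * (k + 1) + 1) = qden x (2 * k + 2) + qden x (2 * k + 1) := by
      rw [show 2 * (k + 1) + 1 = 2 * k + 1 + 2 by ring, qden,
        show 2 * k + 1 + 2 = 2 * (k + 1) + 1 by ring, hodd (k + 1), one_mul]
    rw [h, show 2 * (k + 1) = 2 * k + 1 + 1 by ring]
    linarith [qden_le_qden_succ ha (2 * k + 1)]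

lemma qden_two_mul_add_two_le (k : ℕ) :
    qden x (2 * k + 2) ≤ 3 * cfa (2 * k + 2) x * qden x (2 * k) := by
  have := qden_two_mul_add_one_le ha hodd k
  have := ha (2 * k + 1)
  have := one_le_qden ha (2 * k)
  rw [qden]
  nlinarith

end Recurrence

section Orbit

variable {x : ℝ} (hx : x ∈ Set.Ico 0 1) (hirr : Irrational x)
include hx hirr

lemma gaussMap_iterate_mem_Ioo (n : ℕ) : gaussMap^[n] x ∈ Set.Ioo 0 1 := by
  refine ⟨(lt_of_le_of_ne ?_ (hirr.gaussMap_iterate n).ne_zero.symm), ?_⟩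
  · cases n with
    | zero => exact hx.1
    | succ n => rw [Function.iterate_succ_apply']; exact gaussMap_nonneg _
  · cases n with
    | zero => exact hx.2
    | succ n => rw [Function.iterate_succ_apply']; exact gaussMap_lt_one _

lemma one_le_cfa_succ (n : ℕ) : 1 ≤ cfa (n + 1) x := by
  obtain ⟨h0, h1⟩ := gaussMap_iterate_mem_Ioo hx hirr n
  rw [cfa_succ, Int.le_floor, Int.cast_one]
  exact one_le_inv₀ h0 |>.2 h1.le

open GenContFract

/- The integer/fractional-part stream behind Mathlib's `GenContFract.of x` runs along the
Gauss-map orbit of `x`, so its convergents are `pnum x n / qden x n` and Mathlib's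
approximation bound `abs_sub_convs_le` applies. -/
lemma intFractPair_stream_succ_eq (n : ℕ) :
    IntFractPair.stream x (n + 1) = some ⟨cfa (n + 1) x, gaussMap^[n + 1] x⟩ := by
  have step : ∀ n b, IntFractPair.stream x n = some ⟨b, gaussMap^[n] x⟩ →
      IntFractPair.stream x (n + 1) = some ⟨cfa (n + 1) x, gaussMap^[n + 1] x⟩ := by
    intro n b h
    rw [IntFractPair.stream_succ_of_some h (gaussMap_iterate_mem_Ioo hx hirr n).1.ne',
      Function.iterate_succ_apply', cfa_succ, gaussMap, one_div]
    rfl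
  induction n with
  | zero =>
    refine step 0 0 ?_
    rw [IntFractPair.stream_zero, IntFractPair.of, Int.floor_eq_zero_iff.2 hx,
      Int.fract_eq_self.2 hx]
    rfl
  | succ n ih => exact step _ _ ih

lemma of_s_get?_eq_cfa (n : ℕ) :
    (GenContFract.of x).s.get? n = some ⟨1, (cfa (n + 1) x : ℝ)⟩ :=
  get?_of_eq_some_of_succ_get?_intFractPair_stream (intFractPair_stream_succ_eq hx hirr n)

lemma of_dens_eq_qden : ∀ n, (GenContFract.of x).dens n = qden x n
  | 0 => by simp [qden]
  | 1 => first_den_eq (of_s_get?_eq_cfa hx hirr 0)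
  | n + 2 => by
    rw [dens_recurrence (of_s_get?_eq_cfa hx hirr (n + 1)) (of_dens_eq_qden n)
      (of_dens_eq_qden (n + 1)), qden]
    push_cast
    ring

lemma of_nums_eq_pnum : ∀ n, (GenContFract.of x).nums n = pnum x n
  | 0 => by simp [pnum, zeroth_num_eq_h, of_h_eq_floor, Int.floor_eq_zero_iff.2 hx]
  | 1 => by
    simp [first_num_eq (of_s_get?_eq_cfa hx hirr 0), of_h_eq_floor, Int.floor_eq_zero_iff.2 hx,
      pnum]
  | n + 2 => by
    rw [nums_recurrence (of_s_get?_eq_cfa hx hirr (n + 1)) (of_nums_eq_pnum n)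
      (of_nums_eq_pnum (n + 1)), pnum]
    push_cast
    ring

lemma abs_sub_pnum_div_qden_le (n : ℕ) :
    |x - pnum x n / qden x n| ≤ 1 / (qden x n * qden x (n + 1)) := by
  have hnt : ¬(GenContFract.of x).TerminatedAt n := by
    simp [terminatedAt_iff_s_none, of_s_get?_eq_cfa hx hirr n]
  simpa only [conv_eq_num_div_den, of_nums_eq_pnum hx hirr, of_dens_eq_qden hx hirr]
    using abs_sub_convs_le hnt

lemma abs_sub_pnum_div_qden_succ_le (n : ℕ) :
    |x - pnum x (n + 1) / qden x (n + 1)| ≤ 1 / (cfa (n + 2) x * qden x n ^ 2) := by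
  have ha := one_le_cfa_succ hx hirr
  have ha' : 1 ≤ cfa (n + 2) x := ha (n + 1)
  have hq := one_le_qden ha n
  have hkey : cfa (n + 2) x * qden x n ^ 2 ≤ qden x (n + 1) * qden x (n + 2) :=
    calc cfa (n + 2) x * qden x n ^ 2
        ≤ cfa (n + 2) x * qden x (n + 1) * qden x (n + 1) := by
          have := qden_le_qden_succ ha n
          rw [mul_assoc, ← sq]
          gcongr
      _ ≤ qden x (n + 2) * qden x (n + 1) := by
          gcongr
          · linarith [one_le_qden ha (n + 1)]
          · exact cfa_mul_qden_le ha n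
      _ = qden x (n + 1) * qden x (n + 2) := mul_comm _ _
  exact (abs_sub_pnum_div_qden_le hx hirr (n + 1)).trans
    (one_div_le_one_div_of_le (mul_pos (by exact_mod_cast one_pos.trans_le ha')
      (pow_pos (by exact_mod_cast one_pos.trans_le hq) 2)) (by exact_mod_cast hkey))

end Orbit

lemma log_lt_of_rpow_neg_lt {q a s : ℝ} (hq : 0 < q) (ha : 0 < a)
    (h : q ^ (-s) < 1 / (a * q ^ 2)) : log a < (s - 2) * log q := by
  have := log_lt_log (rpow_pos_of_pos hq _) h
  rw [log_rpow hq, one_div, log_inv, log_mul ha.ne' (by positivity), log_pow] at this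
  push_cast at this
  linarith

lemma log_le_mul_add_of_rpow_neg_lt {q q' a c r t : ℝ} (hq : 1 ≤ q) (ha : 1 ≤ a) (hc : 1 < c)
    (hr : 1 ≤ r) (ht : 1 ≤ t) (hq' : 0 < q') (hq'le : q' ≤ 3 * a * q)
    (h₁ : c ^ (t / 3) ≤ q → q ^ (-(1 + r)) < 1 / (a * q ^ 2))
    (h₂ : q ^ (-(2 * (1 + r))) < 1 / (a * q ^ 2)) :
    log q' ≤ r * (log q + t * (log 3 + (r + 1) * log c)) := by
  have hq0 : 0 < q := by linarith
  have hu : 0 ≤ log q := log_nonneg hq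
  have hlc : 0 < log c := log_pos hc
  have hl3 : 0 ≤ log 3 := log_nonneg (by norm_num)
  have hlog' : log q' ≤ log 3 + log a + log q := by
    rw [← log_mul (by norm_num) (by linarith), ← log_mul (by positivity) hq0.ne']
    exact log_le_log hq' hq'le
  have h3 : log 3 ≤ r * (t * log 3) := by
    nlinarith [mul_le_mul_of_nonneg_left (one_le_mul_of_one_le_of_one_le hr ht) hl3]
  have hX : 0 ≤ t * ((r + 1) * log c) := by positivity
  by_cases hcase : c ^ (t / 3) ≤ q
  · have := log_lt_of_rpow_neg_lt hq0 (by linarith) (h₁ hcase)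
    nlinarith [mul_nonneg (by linarith : (0 : ℝ) ≤ r) hX]
  · have hlt : log q < t / 3 * log c := by
      rw [← log_rpow (by linarith)]
      exact log_lt_log hq0 (not_le.1 hcase)
    have := log_lt_of_rpow_neg_lt hq0 (by linarith) h₂
    nlinarith [mul_le_mul_of_nonneg_left hlt.le (by linarith : (0 : ℝ) ≤ r + 1),
      mul_le_mul_of_nonneg_right hr hX]

lemma log_qden_two_mul_add_two_le {x c d : ℝ} (hx : x ∈ Set.Ico 0 1) (hirr : Irrational x)
    (hodd : ∀ k, cfa (2 * k + 1) x = 1) (hc : 1 < c) (hd : 1 ≤ d) (k : ℕ)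
    (h₁ : c ^ (d ^ (2 * k) / 3) ≤ (qden x (2 * k) : ℝ) →
      (qden x (2 * k) : ℝ) ^ (-(1 + d ^ 2)) < |x - pnum x (2 * k + 1) / qden x (2 * k + 1)|)
    (h₂ : (qden x (2 * k) : ℝ) ^ (-(2 * (1 + d ^ 2))) <
      |x - pnum x (2 * k + 1) / qden x (2 * k + 1)|) :
    log (qden x (2 * k + 2)) ≤
      d ^ 2 * (log (qden x (2 * k)) + (d ^ 2) ^ k * (log 3 + (d ^ 2 + 1) * log c)) := by
  have ha := one_le_cfa_succ hx hirr
  have herr := abs_sub_pnum_div_qden_succ_le hx hirr (2 * k)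
  rw [← pow_mul]
  exact log_le_mul_add_of_rpow_neg_lt (by exact_mod_cast one_le_qden ha (2 * k))
    (by exact_mod_cast ha (2 * k + 1)) hc (one_le_pow₀ hd) (one_le_pow₀ hd)
    (Int.cast_pos.2 (by linarith [one_le_qden ha (2 * k + 2)]))
    (by exact_mod_cast qden_two_mul_add_two_le ha hodd k)
    (fun h => (h₁ h).trans_le herr) (h₂.trans_le herr)

lemma mul_log_le_log_qden {x c y : ℝ} (ha : ∀ n, 1 ≤ cfa (n + 1) x) (hc : 0 < c) {n : ℕ}
    (h : c ^ y ≤ cfa (n + 2) x) : y * log c ≤ log (qden x (n + 2)) := by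
  rw [← log_rpow hc]
  exact (log_le_log (by positivity) h).trans
    (log_le_log (h.trans_lt' (by positivity)) (by exact_mod_cast cfa_le_qden ha n))

lemma le_pow_mul_of_le_mul_add {u : ℕ → ℝ} {r K : ℝ} {m : ℕ} (hr : 1 ≤ r) (hK : 0 ≤ K)
    (hm : 0 ≤ u m) (h : ∀ k ≥ m, u (k + 1) ≤ r * (u k + r ^ k * K)) :
    ∀ k ≥ m, u k ≤ r ^ k * (u m + k * K) := by
  intro k hk
  induction k, hk using Nat.le_induction with
  | base =>
    exact (le_add_of_nonneg_right (by positivity)).trans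
      (le_mul_of_one_le_left (by positivity) (one_le_pow₀ hr))
  | succ k hk ih =>
    calc u (k + 1) ≤ r * (u k + r ^ k * K) := h k hk
      _ ≤ r * (r ^ k * (u m + k * K) + r ^ k * K) := by gcongr
      _ = r ^ (k + 1) * (u m + ↑(k + 1) * K) := by push_cast; ring

lemma eventually_pow_mul_lt_pow_mul {r s A K L : ℝ} (hr : 0 ≤ r) (hrs : r < s) (hL : 0 < L) :
    ∀ᶠ k : ℕ in atTop, r ^ k * (A + k * K) < s ^ k * L := by
  have hs : 0 < s := hr.trans_lt hrs
  have hrs' : r / s < 1 := (div_lt_one hs).2 hrs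
  have hlim : Tendsto (fun k : ℕ => A * (r / s) ^ k + K * (k * (r / s) ^ k)) atTop (𝓝 0) := by
    simpa using ((tendsto_pow_atTop_nhds_zero_of_lt_one (by positivity) hrs').const_mul A).add
      ((tendsto_self_mul_const_pow_of_lt_one (by positivity) hrs').const_mul K)
  filter_upwards [hlim.eventually_lt_const hL] with k hk
  have hsk : 0 < s ^ k := pow_pos hs k
  calc r ^ k * (A + k * K) = s ^ k * (A * (r / s) ^ k + K * (k * (r / s) ^ k)) := by
        rw [div_pow]; field_simp
    _ < s ^ k * L := by gcongr

theorem cover_of_Ebc_general (b c d : ℝ) (hc : 1 < c) (hd1 : 1 < d) (hdb : d < b)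
    (m : ℕ) (x : ℝ)
    (hx : x ∈ Ieven ∧ ∃ᶠ n in atTop, c ^ (b ^ (2 * n)) ≤ (cfa (2 * n) x : ℝ)) :
    (∃ n : ℕ, (m : ℤ) ≤ qden x (2 * n) ∧
        c ^ ((d : ℝ) ^ (2 * n) / 3) ≤ (qden x (2 * n) : ℝ) ∧
        |x - (pnum x (2 * n + 1) : ℝ) / (qden x (2 * n + 1) : ℝ)| ≤
          (qden x (2 * n) : ℝ) ^ (-(1 + d ^ 2))) ∨
    (∃ n : ℕ, (m : ℤ) ≤ qden x (2 * n) ∧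
        |x - (pnum x (2 * n + 1) : ℝ) / (qden x (2 * n + 1) : ℝ)| ≤
          (qden x (2 * n) : ℝ) ^ (-(2 * (1 + d ^ 2)))) := by
  obtain ⟨⟨hx, hirr, hodd⟩, hfreq⟩ := hx
  have ha := one_le_cfa_succ hx hirr
  by_contra! ⟨H₁, H₂⟩
  set K := log 3 + (d ^ 2 + 1) * log c
  set u : ℕ → ℝ := fun k => log (qden x (2 * k))
  have hmq : ∀ k ≥ m, (m : ℤ) ≤ qden x (2 * k) := fun k hk => by
    have := le_qden_two_mul ha k
    omega
  have hK : 0 ≤ K := by have := log_nonneg hc.le; positivity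
  have hgrowth : ∀ k ≥ m, u k ≤ (d ^ 2) ^ k * (u m + k * K) :=
    le_pow_mul_of_le_mul_add (one_le_pow₀ hd1.le) hK
      (log_nonneg (by exact_mod_cast one_le_qden ha (2 * m))) fun k hk =>
      log_qden_two_mul_add_two_le hx hirr hodd hc hd1.le k (H₁ k (hmq k hk)) (H₂ k (hmq k hk))
  obtain ⟨k, hk, hk_small, hk_m, hk_pos⟩ := (hfreq.and_eventually
    ((eventually_pow_mul_lt_pow_mul (s := b ^ 2) (A := u m) (K := K) (sq_nonneg d) (by gcongr)
      (log_pos hc)).and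
      ((eventually_ge_atTop m).and (eventually_gt_atTop 0)))).exists
  obtain ⟨j, rfl⟩ : ∃ j, k = j + 1 := Nat.exists_eq_add_one.2 hk_pos
  have hlow := mul_log_le_log_qden (n := 2 * j) ha (by linarith) hk
  have hup : log (qden x (2 * j + 2) : ℝ) ≤ _ := hgrowth (j + 1) hk_m
  rw [pow_mul] at hlow
  linarith

/-- Proposition 6.2: for `1 < d < b`, `c > 1` and every positive integer `m`, each
`x ∈ E(b,c)` satisfies (i) there is `n` with `q_{2n}(x) ≥ m`, `q_{2n}(x) ≥ c^{d^{2n}/3}`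
and `|x − p_{2n+1}(x)/q_{2n+1}(x)| ≤ q_{2n}(x)^{−(1+d²)}`, or (ii) there is `n` with
`q_{2n}(x) ≥ m` and `|x − p_{2n+1}(x)/q_{2n+1}(x)| ≤ q_{2n}(x)^{−2(1+d²)}`. -/
theorem cover_of_Ebc (b c d : ℝ) (hb : 1 < b) (hc : 1 < c) (hd1 : 1 < d) (hdb : d < b)
    (m : ℕ) (hm : 0 < m) (x : ℝ)
    (hx : x ∈ Ieven ∧ ∃ᶠ n in atTop, c ^ (b ^ (2 * n)) ≤ (cfa (2 * n) x : ℝ)) :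
    (∃ n : ℕ, (m : ℤ) ≤ qden x (2 * n) ∧
        c ^ ((d : ℝ) ^ (2 * n) / 3) ≤ (qden x (2 * n) : ℝ) ∧
        |x - (pnum x (2 * n + 1) : ℝ) / (qden x (2 * n + 1) : ℝ)| ≤
          (qden x (2 * n) : ℝ) ^ (-(1 + d ^ 2))) ∨
    (∃ n : ℕ, (m : ℤ) ≤ qden x (2 * n) ∧
        |x - (pnum x (2 * n + 1) : ℝ) / (qden x (2 * n + 1) : ℝ)| ≤
          (qden x (2 * n) : ℝ) ^ (-(2 * (1 + d ^ 2)))) :=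
  cover_of_Ebc_general b c d hc hd1 hdb m x hx
end
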